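/- For the metric on R^4 given by g(∂x,∂xbar)=g(∂y,∂y)=g(∂z,∂z)=1, g(∂x,∂z)=2φ(y), the nonzero curvature tensor components (up to symmetries) are: R(∂x,∂y,∂y,∂x) = φ'φ', R(∂x,∂z,∂z,∂x) = φ'φ', R(∂x,∂y,∂y,∂z) = -φ'', and R(∂y,∂z,∂z,∂y) = R(∂y,∂x,∂x,∂z) = R(∂x,∂z,∂z,∂y) = 0. -/

import Mathlib

noncomputable section

open Finset in
/-- Partial derivative in the `i`-th coordinate direction. -/
def pd {ι : Type*} [Fintype ι] [DecidableEq ι]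
    (i : ι) (f : (ι → ℝ) → ℝ) (p : ι → ℝ) : ℝ :=
  fderiv ℝ f p (Pi.single i 1)

/-- Christoffel symbols of the second kind `Γ^k_{ij}` of the metric `g`
(with inverse metric `ginv`). -/
def christoffel {ι : Type*} [Fintype ι] [DecidableEq ι]
    (g ginv : (ι → ℝ) → Matrix ι ι ℝ) (k i j : ι) (p : ι → ℝ) : ℝ :=
  (1 / 2) * ∑ l, ginv p k l *
    (pd i (fun q => g q j l) p + pd j (fun q => g q i l) p - pd l (fun q => g q i j) p)

/-- Components of the curvature operator of the Levi-Civita connection: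
`R(∂_i,∂_j)∂_k = ∑_l (curvOp g ginv i j k l) ∂_l`. -/
def curvOp {ι : Type*} [Fintype ι] [DecidableEq ι]
    (g ginv : (ι → ℝ) → Matrix ι ι ℝ) (i j k l : ι) (p : ι → ℝ) : ℝ :=
  pd i (christoffel g ginv l j k) p - pd j (christoffel g ginv l i k) p
    + ∑ m, christoffel g ginv l i m p * christoffel g ginv m j k p
    - ∑ m, christoffel g ginv l j m p * christoffel g ginv m i k p

/-- The curvature operator extended multilinearly to tangent vectors:
component `l` of `R(v,w)u`. -/
def curvVec {ι : Type*} [Fintype ι] [DecidableEq ι]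
    (g ginv : (ι → ℝ) → Matrix ι ι ℝ) (p : ι → ℝ) (v w u : ι → ℝ) : ι → ℝ :=
  fun l => ∑ i, ∑ j, ∑ k, v i * w j * u k * curvOp g ginv i j k l p

/-- The polarized Jacobi operator `J(v,w)u = (1/2){R(u,v)w + R(u,w)v}`. -/
def jacobiVec {ι : Type*} [Fintype ι] [DecidableEq ι]
    (g ginv : (ι → ℝ) → Matrix ι ι ℝ) (p : ι → ℝ) (v w u : ι → ℝ) : ι → ℝ :=
  fun l => (1 / 2) * (curvVec g ginv p u v w l + curvVec g ginv p u w v l)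

/-- The Ricci tensor `Ric_{ij} = Tr (z ↦ R(z,∂_i)∂_j)`. -/
def ricci {ι : Type*} [Fintype ι] [DecidableEq ι]
    (g ginv : (ι → ℝ) → Matrix ι ι ℝ) (i j : ι) (p : ι → ℝ) : ℝ :=
  ∑ m, curvOp g ginv m i j m p

/-- The Ricci operator (Ricci tensor with one index raised by `g`), as a matrix:
`rho(∂_j) = ∑_i (ricciOp p) i j ∂_i`. -/
def ricciOp {ι : Type*} [Fintype ι] [DecidableEq ι]
    (g ginv : (ι → ℝ) → Matrix ι ι ℝ) (p : ι → ℝ) : Matrix ι ι ℝ :=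
  fun i j => ∑ m, ginv p i m * ricci g ginv m j p

/-- The (0,4) curvature tensor `R_{ijkl} = g(R(∂_i,∂_j)∂_k, ∂_l)`. -/
def curv4 {ι : Type*} [Fintype ι] [DecidableEq ι]
    (g ginv : (ι → ℝ) → Matrix ι ι ℝ) (i j k l : ι) (p : ι → ℝ) : ℝ :=
  ∑ m, curvOp g ginv i j k m p * g p m l

/-- The metric of Theorem 1.3 on `ℝ⁴` with coordinates `(x, y, z, x̄)`:
`g(∂x,∂x̄) = g(∂y,∂y) = g(∂z,∂z) = 1`, `g(∂x,∂z) = 2φ(y)`. -/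
def gPhi (φ : ℝ → ℝ) (p : Fin 4 → ℝ) : Matrix (Fin 4) (Fin 4) ℝ :=
  Matrix.of
    ![![0, 0, 2 * φ (p 1), 1],
      ![0, 1, 0, 0],
      ![2 * φ (p 1), 0, 1, 0],
      ![1, 0, 0, 0]]


set_option maxHeartbeats 2000000

lemma pd_const (i : Fin 4) (c : ℝ) (p : Fin 4 → ℝ) : pd i (fun _ => c) p = 0 := by
  simp [pd]

lemma pd_single (F : ℝ → ℝ) (p : Fin 4 → ℝ) (hF : DifferentiableAt ℝ F (p 1)) (i : Fin 4) :
    pd i (fun q => F (q 1)) p = if (1 : Fin 4) = i then deriv F (p 1) else 0 := by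
  unfold pd
  have h : HasFDerivAt (fun q : Fin 4 → ℝ => F (q 1))
      ((deriv F (p 1)) • (ContinuousLinearMap.proj 1 : (Fin 4 → ℝ) →L[ℝ] ℝ)) p :=
    hF.hasDerivAt.comp_hasFDerivAt p
      ((ContinuousLinearMap.proj 1 : (Fin 4 → ℝ) →L[ℝ] ℝ).hasFDerivAt)
  rw [h.fderiv]
  simp [Pi.single_apply]

def GinvM (φ : ℝ → ℝ) (p : Fin 4 → ℝ) : Matrix (Fin 4) (Fin 4) ℝ :=
  Matrix.of
    ![![0, 0, 0, 1],
      ![0, 1, 0, 0],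
      ![0, 0, 1, -(2 * φ (p 1))],
      ![1, 0, -(2 * φ (p 1)), (2 * φ (p 1))^2]]

def chrVal (φ : ℝ → ℝ) (k i j : Fin 4) (t : ℝ) : ℝ :=
  ![![![0,0,0,0],![0,0,0,0],![0,0,0,0],![0,0,0,0]],
    ![![0,0,-(deriv φ t),0],![0,0,0,0],![-(deriv φ t),0,0,0],![0,0,0,0]],
    ![![0,deriv φ t,0,0],![deriv φ t,0,0,0],![0,0,0,0],![0,0,0,0]],
    ![![0,-(2 * φ t * deriv φ t),0,0],![-(2 * φ t * deriv φ t),0,deriv φ t,0],![0,deriv φ t,0,0],![0,0,0,0]]] k i j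

/-- For the metric `gPhi` on `ℝ⁴` (coordinates `(x,y,z,x̄)` indexed
`0,1,2,3`), the (0,4) curvature tensor has components
`R(∂x,∂y,∂y,∂x) = φ'φ'`, `R(∂x,∂z,∂z,∂x) = φ'φ'`, `R(∂x,∂y,∂y,∂z) = -φ''`,
`R(∂y,∂z,∂z,∂y) = R(∂y,∂x,∂x,∂z) = R(∂x,∂z,∂z,∂y) = 0`. -/
theorem stmt_15 (φ : ℝ → ℝ) (hφ : ContDiff ℝ (⊤ : ℕ∞) φ)
    (ginv : (Fin 4 → ℝ) → Matrix (Fin 4) (Fin 4) ℝ)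
    (hginv : ∀ p, gPhi φ p * ginv p = 1 ∧ ginv p * gPhi φ p = 1) :
    ∀ p : Fin 4 → ℝ,
      curv4 (gPhi φ) ginv 0 1 1 0 p = deriv φ (p 1) * deriv φ (p 1) ∧
      curv4 (gPhi φ) ginv 0 2 2 0 p = deriv φ (p 1) * deriv φ (p 1) ∧
      curv4 (gPhi φ) ginv 0 1 1 2 p = -deriv (deriv φ) (p 1) ∧
      curv4 (gPhi φ) ginv 1 2 2 1 p = 0 ∧
      curv4 (gPhi φ) ginv 1 0 0 2 p = 0 ∧
      curv4 (gPhi φ) ginv 0 2 2 1 p = 0 := by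
  have hφ1 : Differentiable ℝ φ := hφ.differentiable (by simp)
  have hphiinf : ContDiff ℝ (⊤ : ℕ∞) φ := hφ.of_le (by simp)
  have hφd : Differentiable ℝ (deriv φ) :=
    ((contDiff_infty_iff_deriv.mp hphiinf).2).differentiable (by simp)
  have hG : ∀ p, ginv p = GinvM φ p := by
    intro p
    have h2 : GinvM φ p * gPhi φ p = 1 := by
      ext i j
      fin_cases i <;> fin_cases j <;>
        (simp [GinvM, gPhi, Matrix.mul_apply, Fin.sum_univ_four, Matrix.one_apply,
          Matrix.vecHead, Matrix.vecTail, Function.comp]; try ring)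
    calc ginv p = 1 * ginv p := (one_mul _).symm
      _ = (GinvM φ p * gPhi φ p) * ginv p := by rw [h2]
      _ = GinvM φ p * (gPhi φ p * ginv p) := Matrix.mul_assoc _ _ _
      _ = GinvM φ p := by rw [(hginv p).1, mul_one]
  have h2φ : ∀ (i : Fin 4) p, pd i (fun q : Fin 4 → ℝ => 2 * φ (q 1)) p
      = if (1 : Fin 4) = i then 2 * deriv φ (p 1) else 0 := by
    intro i p
    rw [pd_single (fun t => 2 * φ t) p (by fun_prop) i, deriv_const_mul _ (hφ1 _)]
  have hchr : ∀ k i j p, christoffel (gPhi φ) ginv k i j p = chrVal φ k i j (p 1) := by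
    intro k i j p
    fin_cases k <;> fin_cases i <;> fin_cases j <;>
      (simp [christoffel, hG, GinvM, gPhi, Fin.sum_univ_four, chrVal, pd_const, h2φ,
        Matrix.vecHead, Matrix.vecTail]; try ring)
  have hchrF : ∀ k i j, christoffel (gPhi φ) ginv k i j = fun p => chrVal φ k i j (p 1) :=
    fun k i j => funext (hchr k i j)
  have hpdA : ∀ (i : Fin 4) p, pd i (fun q : Fin 4 → ℝ => deriv φ (q 1)) p
      = if (1 : Fin 4) = i then deriv (deriv φ) (p 1) else 0 :=
    fun i p => pd_single _ _ (hφd _) i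
  have hpdB : ∀ (i : Fin 4) p, pd i (fun q : Fin 4 → ℝ => -(deriv φ (q 1))) p
      = if (1 : Fin 4) = i then -(deriv (deriv φ) (p 1)) else 0 := by
    intro i p
    rw [pd_single (fun t => -(deriv φ t)) p (by fun_prop) i, deriv.fun_neg]
  have hpdC : ∀ (i : Fin 4) p, pd i (fun q : Fin 4 → ℝ => -(2 * φ (q 1) * deriv φ (q 1))) p
      = if (1 : Fin 4) = i then
          -(2 * deriv φ (p 1) * deriv φ (p 1) + 2 * φ (p 1) * deriv (deriv φ) (p 1)) else 0 := by
    intro i p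
    have h : HasDerivAt (fun t => -(2 * φ t * deriv φ t))
        (-(2 * deriv φ (p 1) * deriv φ (p 1) + 2 * φ (p 1) * deriv (deriv φ) (p 1))) (p 1) :=
      (((hφ1 (p 1)).hasDerivAt.const_mul 2).mul (hφd (p 1)).hasDerivAt).neg
    rw [pd_single (fun t => -(2 * φ t * deriv φ t)) p h.differentiableAt i, h.deriv]
  intro p
  refine ⟨?_, ?_, ?_, ?_, ?_, ?_⟩ <;>
    (simp [curv4, curvOp, Fin.sum_univ_four, hchrF, chrVal, gPhi, pd_const,
      hpdA, hpdB, hpdC, Matrix.vecHead, Matrix.vecTail]; try ring)
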